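/- Let a₁,…,a_k, b, n be integers with n ≥ 1, and let ℓ = gcd(a₁,…,a_k,n). The linear congruence a₁x₁ + ⋯ + a_k x_k ≡ b (mod n) has a solution (x₁,…,x_k) ∈ (ℤ/nℤ)^k if and only if ℓ divides b; moreover, when ℓ ∣ b, the number of solutions in (ℤ/nℤ)^k is exactly ℓ·n^{k-1}. -/

import Mathlib

open Finset

lemma bezout_finset {ι : Type*} [DecidableEq ι] (s : Finset ι) (f : ι → ℤ) :
    ∃ c : ι → ℤ, ∑ i ∈ s, c i * f i = s.gcd f := by
  classical
  induction s using Finset.induction_on with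
  | empty => exact ⟨0, by simp⟩
  | @insert a s ha ih =>
    obtain ⟨c, hc⟩ := ih
    refine ⟨fun i => if i = a then Int.gcdA (f a) (s.gcd f)
      else Int.gcdB (f a) (s.gcd f) * c i, ?_⟩
    rw [Finset.sum_insert ha, Finset.gcd_insert]
    beta_reduce
    rw [if_pos rfl]
    have h1 : ∀ i ∈ s, (if i = a then Int.gcdA (f a) (s.gcd f)
        else Int.gcdB (f a) (s.gcd f) * c i) * f i
        = Int.gcdB (f a) (s.gcd f) * (c i * f i) := by
      intro i hi
      rw [if_neg (by rintro rfl; exact ha hi)]; ring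
    rw [Finset.sum_congr rfl h1, ← Finset.mul_sum, hc, ← Int.coe_gcd,
      Int.gcd_eq_gcd_ab (f a) (s.gcd f)]
    ring

lemma natAbs_gcd_cast {ι : Type*} [DecidableEq ι] (s : Finset ι) (f : ι → ℤ) :
    ((s.gcd fun i => (f i).natAbs : ℕ) : ℤ) = s.gcd f := by
  induction s using Finset.induction_on with
  | empty => simp
  | @insert a s ha ih =>
    rw [Finset.gcd_insert, Finset.gcd_insert, ← ih, ← Int.coe_gcd]
    simp [Int.gcd]
    rfl

lemma key (k n : ℕ) [NeZero n] (a : Fin k → ℤ) (b : ℤ)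
    (l : ℕ) (hl : l = Nat.gcd (Finset.univ.gcd fun i => (a i).natAbs) n) :
    (∃ x : Fin k → ZMod n, ∑ i, (a i : ZMod n) * x i = (b : ZMod n)) ↔ (l : ℤ) ∣ b := by
  have hla : ∀ i, (l : ℤ) ∣ a i := by
    intro i
    have h1 : l ∣ (a i).natAbs := by
      rw [hl]; exact (Nat.gcd_dvd_left _ _).trans (Finset.gcd_dvd (Finset.mem_univ i))
    exact Int.dvd_natAbs.mp (Int.natCast_dvd_natCast.mpr h1)
  have hln : (l : ℤ) ∣ (n : ℤ) := by
    rw [hl]; exact Int.natCast_dvd_natCast.mpr (Nat.gcd_dvd_right _ _)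
  constructor
  · rintro ⟨x, hx⟩
    have h1 : ∀ i, (((x i).val : ℤ) : ZMod n) = x i := by
      intro i; rw [Int.cast_natCast, ZMod.natCast_val, ZMod.cast_id]
    have h2 : (((∑ i, a i * ((x i).val : ℤ)) : ℤ) : ZMod n) = (b : ZMod n) := by
      rw [Int.cast_sum]
      simp only [Int.cast_mul, h1]
      exact hx
    rw [ZMod.intCast_eq_intCast_iff] at h2
    have h3 : (n : ℤ) ∣ (∑ i, a i * ((x i).val : ℤ)) - b := Int.ModEq.dvd h2.symm
    have h4 : (l : ℤ) ∣ ∑ i, a i * ((x i).val : ℤ) :=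
      Finset.dvd_sum fun i _ => Dvd.dvd.mul_right (hla i) _
    have := dvd_sub h4 (hln.trans h3)
    simpa using this
  · rintro ⟨m, rfl⟩
    obtain ⟨c, hc⟩ := bezout_finset (Finset.univ : Finset (Fin k)) a
    rw [← natAbs_gcd_cast] at hc
    set d : ℕ := Finset.univ.gcd fun i => (a i).natAbs with hd
    have hlun : (l : ℤ) = (d : ℤ) * Int.gcdA d n + (n : ℤ) * Int.gcdB d n := by
      rw [hl, ← Int.gcd_natCast_natCast]
      exact Int.gcd_eq_gcd_ab _ _
    set u := Int.gcdA d n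
    refine ⟨fun i => ((c i * u * m : ℤ) : ZMod n), ?_⟩
    have hint : (∑ i, a i * (c i * u * m) : ℤ) = (l : ℤ) * m - (n : ℤ) * (Int.gcdB d n * m) := by
      have h5 : (∑ i, a i * (c i * u * m) : ℤ) = (∑ i, c i * a i) * (u * m) := by
        rw [Finset.sum_mul]; apply Finset.sum_congr rfl; intros; ring
      rw [h5, hc]
      linear_combination (-m) * hlun
    have := congrArg (fun z : ℤ => (z : ZMod n)) hint
    push_cast at this
    rw [ZMod.natCast_self] at this
    simpa using this

lemma fiber_card (k n : ℕ) [NeZero n] (a : Fin k → ℤ) (c : ZMod n) (x0 : Fin k → ZMod n)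
    (hx0 : ∑ i, (a i : ZMod n) * x0 i = c) :
    ((Finset.univ : Finset (Fin k → ZMod n)).filter
        (fun x => ∑ i, (a i : ZMod n) * x i = c)).card
      = ((Finset.univ : Finset (Fin k → ZMod n)).filter
        (fun x => ∑ i, (a i : ZMod n) * x i = 0)).card := by
  have hadd : ∀ x y : Fin k → ZMod n,
      ∑ i, (a i : ZMod n) * (x i + y i)
        = ∑ i, (a i : ZMod n) * x i + ∑ i, (a i : ZMod n) * y i := by
    intro x y; rw [← Finset.sum_add_distrib]
    exact Finset.sum_congr rfl fun i _ => mul_add _ _ _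
  apply Finset.card_bij' (fun z _ => z - x0) (fun y _ => y + x0)
  · intro z hz
    simp only [Finset.mem_filter, Finset.mem_univ, true_and, Pi.sub_apply] at hz ⊢
    have := hadd (z - x0) x0
    simp only [Pi.sub_apply, sub_add_cancel] at this
    rw [hz, hx0] at this
    linear_combination -this
  · intro y hy
    simp only [Finset.mem_filter, Finset.mem_univ, true_and] at hy ⊢
    have := hadd y x0
    simp only [Pi.add_apply] at this ⊢
    rw [hy, hx0, zero_add] at this
    simpa using this
  · intro z _; simp
  · intro y _; simp

lemma solvable_count (n : ℕ) [NeZero n] (l : ℕ) (hln : l ∣ n) (hl0 : 0 < l) :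
    ((Finset.univ : Finset (ZMod n)).filter (fun y => l ∣ y.val)).card = n / l := by
  have hn0 : 0 < n := Nat.pos_of_ne_zero (NeZero.ne n)
  rw [← Finset.card_range (n / l)]
  symm
  apply Finset.card_bij' (fun j _ => ((l * j : ℕ) : ZMod n))
    (fun y _ => y.val / l)
  · intro j hj
    simp only [Finset.mem_range] at hj
    have hlt : l * j < n := by
      calc l * j < l * (n / l) := (Nat.mul_lt_mul_left hl0).mpr hj
      _ = n := Nat.mul_div_cancel' hln
    simp only [Finset.mem_filter, Finset.mem_univ, true_and]
    rw [ZMod.val_natCast, Nat.mod_eq_of_lt hlt]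
    exact Dvd.intro j rfl
  · intro y hy
    simp only [Finset.mem_filter, Finset.mem_univ, true_and] at hy
    simp only [Finset.mem_range]
    exact Nat.div_lt_div_of_lt_of_dvd hln (ZMod.val_lt y)
  · intro j hj
    simp only [Finset.mem_range] at hj
    have hlt : l * j < n := by
      calc l * j < l * (n / l) := (Nat.mul_lt_mul_left hl0).mpr hj
      _ = n := Nat.mul_div_cancel' hln
    rw [ZMod.val_natCast, Nat.mod_eq_of_lt hlt, Nat.mul_div_cancel_left _ hl0]
  · intro y hy
    simp only [Finset.mem_filter, Finset.mem_univ, true_and] at hy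
    rw [Nat.mul_div_cancel' hy, ZMod.natCast_val, ZMod.cast_id]

theorem stmt_3 (k n : ℕ) (hk : 1 ≤ k) (hn : 1 ≤ n) [NeZero n] (a : Fin k → ℤ) (b : ℤ)
    (l : ℕ) (hl : l = Nat.gcd (Finset.univ.gcd fun i => (a i).natAbs) n) :
    ((∃ x : Fin k → ZMod n, ∑ i, (a i : ZMod n) * x i = (b : ZMod n)) ↔ (l : ℤ) ∣ b) ∧
      ((l : ℤ) ∣ b →
        ((Finset.univ : Finset (Fin k → ZMod n)).filter
            (fun x => ∑ i, (a i : ZMod n) * x i = (b : ZMod n))).card = l * n ^ (k - 1)) := by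
  refine ⟨key k n a b l hl, fun hb => ?_⟩
  have hln : l ∣ n := hl ▸ Nat.gcd_dvd_right _ _
  have hl0 : 0 < l := by
    rcases Nat.eq_zero_or_pos l with h | h
    · exfalso
      rw [h] at hln
      omega
    · exact h
  set N := ((Finset.univ : Finset (Fin k → ZMod n)).filter
      (fun x => ∑ i, (a i : ZMod n) * x i = 0)).card with hN
  have hsolv : ∀ y : ZMod n,
      (∃ x : Fin k → ZMod n, ∑ i, (a i : ZMod n) * x i = y) ↔ l ∣ y.val := by
    intro y
    have hcast : (((y.val : ℤ)) : ZMod n) = y := by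
      rw [Int.cast_natCast, ZMod.natCast_val, ZMod.cast_id]
    have h := key k n a (y.val : ℤ) l hl
    rw [hcast] at h
    rw [h, Int.natCast_dvd_natCast]
  have main_count : n ^ k = (n / l) * N := by
    have h1 : (Finset.univ : Finset (Fin k → ZMod n)).card
        = ∑ y : ZMod n, ((Finset.univ : Finset (Fin k → ZMod n)).filter
            (fun x => ∑ i, (a i : ZMod n) * x i = y)).card :=
      Finset.card_eq_sum_card_fiberwise (fun x _ => Finset.mem_univ _)
    have h2 : ∀ y : ZMod n,
        ((Finset.univ : Finset (Fin k → ZMod n)).filter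
            (fun x => ∑ i, (a i : ZMod n) * x i = y)).card
          = if l ∣ y.val then N else 0 := by
      intro y
      by_cases h : l ∣ y.val
      · rw [if_pos h]
        obtain ⟨x0, hx0⟩ := (hsolv y).mpr h
        exact fiber_card k n a y x0 hx0
      · rw [if_neg h, Finset.card_eq_zero, Finset.filter_eq_empty_iff]
        intro x _
        exact fun hx => h ((hsolv y).mp ⟨x, hx⟩)
    have h3 : (Finset.univ : Finset (Fin k → ZMod n)).card = n ^ k := by
      simp [Fintype.card_fun, ZMod.card]
    rw [h3] at h1
    rw [h1, Finset.sum_congr rfl (fun y _ => h2 y), Finset.sum_ite,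
      Finset.sum_const, Finset.sum_const_zero, add_zero, smul_eq_mul,
      solvable_count n l hln hl0]
  obtain ⟨x0, hx0⟩ := (key k n a b l hl).mpr hb
  rw [fiber_card k n a (b : ZMod n) x0 hx0, ← hN]
  have hnl0 : 0 < n / l := Nat.div_pos (Nat.le_of_dvd hn hln) hl0
  apply Nat.eq_of_mul_eq_mul_left hnl0
  rw [← main_count]
  calc n ^ k = n ^ (k - 1 + 1) := by rw [Nat.sub_add_cancel hk]
    _ = n * n ^ (k - 1) := pow_succ' n _
    _ = (n / l) * (l * n ^ (k - 1)) := by rw [← mul_assoc, Nat.div_mul_cancel hln]
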